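/- arXiv:math/0407346 — 2 statements merged into one kernel-verified Lean document; each statement's English description precedes it below -/
import Mathlib

section
/- Let F_0,…,F_k be strictly convex compact bodies in affine subspaces L_0,…,L_k as in the k-cone construction, and fix a unit normal direction n. Suppose x ∈ η(x_0,…,x_k) ∩ η(y_0,…,y_k) where both (x_0,…,x_k) and (y_0,…,y_k) are good tuples (all normals equal to some common n(x) resp. n(y)) with the same barycentric coefficients α_0,…,α_k, all α_i > 0, and n(x) = n. Then (y_0,…,y_k) = (x_0,…,x_k). In other words, the map x_0 ↦ point of η on a fixed cross-section is injective. -/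
/-- Injectivity of the cross-section map for `k`-cones: if two good tuples
`(x₀,…,x_k)` and `(y₀,…,y_k)` (with common outward normals `n` and `n'` respectively)
have the same barycentric coefficients `α_i > 0` and determine the same point
`∑ α_i x_i = ∑ α_i y_i`, then the tuples coincide. -/
theorem stmt10 {m k : ℕ} (F : Fin (k + 1) → Set (EuclideanSpace ℝ (Fin m)))
    (hcomp : ∀ i, IsCompact (F i)) (hconv : ∀ i, Convex ℝ (F i))
    (hsc : ∀ i, StrictConvex ℝ (F i))
    (n n' : EuclideanSpace ℝ (Fin m)) (hn : ‖n‖ = 1) (hn' : ‖n'‖ = 1)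
    (x y : Fin (k + 1) → EuclideanSpace ℝ (Fin m))
    (hxF : ∀ i, x i ∈ frontier (F i))
    (hyF : ∀ i, y i ∈ frontier (F i))
    (hxmax : ∀ i, IsMaxOn (fun w => (inner ℝ n w : ℝ)) (F i) (x i))
    (hymax : ∀ i, IsMaxOn (fun w => (inner ℝ n' w : ℝ)) (F i) (y i))
    (α : Fin (k + 1) → ℝ) (hα : ∀ i, 0 < α i) (hsum : ∑ i, α i = 1)
    (hpoint : ∑ i, α i • x i = ∑ i, α i • y i) :
    y = x := by
  have hclosed : ∀ i, IsClosed (F i) := fun i => (hcomp i).isClosed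
  have hxmem : ∀ i, x i ∈ F i := fun i => by
    have := (hxF i).1
    rwa [(hclosed i).closure_eq] at this
  have hymem : ∀ i, y i ∈ F i := fun i => by
    have := (hyF i).1
    rwa [(hclosed i).closure_eq] at this
  -- each term inequality
  have hle : ∀ i, α i * (inner ℝ n (y i) : ℝ) ≤ α i * (inner ℝ n (x i) : ℝ) := fun i =>
    mul_le_mul_of_nonneg_left (hxmax i (hymem i)) (hα i).le
  -- sums are equal
  have hsumeq : ∑ i, α i * (inner ℝ n (y i) : ℝ) = ∑ i, α i * (inner ℝ n (x i) : ℝ) := by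
    have h1 : (inner ℝ n (∑ i, α i • y i) : ℝ) = ∑ i, α i * (inner ℝ n (y i) : ℝ) := by
      rw [inner_sum]; congr 1; ext i; rw [real_inner_smul_right]
    have h2 : (inner ℝ n (∑ i, α i • x i) : ℝ) = ∑ i, α i * (inner ℝ n (x i) : ℝ) := by
      rw [inner_sum]; congr 1; ext i; rw [real_inner_smul_right]
    rw [← h1, ← h2, hpoint]
  have heq : ∀ i, (inner ℝ n (y i) : ℝ) = (inner ℝ n (x i) : ℝ) := by
    intro i
    have := (Finset.sum_eq_sum_iff_of_le (fun i _ => hle i)).1 hsumeq i (Finset.mem_univ i)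
    exact mul_left_cancel₀ (hα i).ne' this
  funext i
  by_contra hne
  set z := (1/2 : ℝ) • x i + (1/2 : ℝ) • y i with hz
  have hmid : z ∈ interior (F i) := by
    apply hsc i (hxmem i) (hymem i) (fun h => hne h.symm) <;> norm_num
  obtain ⟨ε, hε, hball⟩ := Metric.mem_nhds_iff.1 (mem_interior_iff_mem_nhds.1 hmid)
  have hinz : (inner ℝ n z : ℝ) = (inner ℝ n (x i) : ℝ) := by
    rw [hz, inner_add_right, real_inner_smul_right, real_inner_smul_right, heq i]
    ring
  have hw : z + (ε / 2) • n ∈ F i := by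
    apply hball
    simp only [Metric.mem_ball, dist_eq_norm, add_sub_cancel_left, norm_smul, hn,
      Real.norm_eq_abs, abs_of_pos (half_pos hε), mul_one]
    linarith
  have := hxmax i hw
  simp only [Set.mem_setOf_eq, inner_add_right, real_inner_smul_right, hinz,
    real_inner_self_eq_norm_sq, hn] at this
  nlinarith
end

section
/- Let W ⊂ ℝ^{d+1} with finite measure, and let P be a finite family of sets (plates) such that for any two points x, x' with |x−x'| ≥ tδ^{-1}, the number of plates containing both x and x' is at most K t^{-d}. Suppose for each π ∈ P there are two tδ^{-1}-cubes Q(π), Q'(π) at distance ≥ tδ^{-1} from each other with |W ∩ Q(π) ∩ π| ≥ tν and |W ∩ Q'(π) ∩ π| ≥ tν, and that at least t^{2d+2}|P| plates share the same pair (Q, Q'). Then ν ≤ C t^{-c} |W| |P|^{-1/2} for constants C, c depending only on d and K. -/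
open MeasureTheory
open scoped ENNReal

/-- The bush/double-counting argument of Lemma 2.3: if any two `tδ⁻¹`-separated points lie in
at most `K t^{-d}` common plates, and a proportion `t^{2d+2}` of the plates each meet `W` in
measure `≥ tν` inside each of two fixed cubes `Q, Q'` at distance `≥ tδ⁻¹`, then
`ν ≤ C t^{-c} |W| |P|^{-1/2}`. -/
theorem stmt13 (d : ℕ) (K : ℝ) (hK : 0 < K) :
    ∃ C c : ℝ, 0 < C ∧ 0 < c ∧
      ∀ (t δ ν : ℝ), 0 < t → 0 < δ → 0 ≤ ν →
      ∀ (W : Set (EuclideanSpace ℝ (Fin (d + 1)))), MeasurableSet W → volume W ≠ ⊤ →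
      ∀ (P : Finset (Set (EuclideanSpace ℝ (Fin (d + 1))))), P.Nonempty →
        (∀ π ∈ P, MeasurableSet π) →
        (∀ x x' : EuclideanSpace ℝ (Fin (d + 1)), t * δ⁻¹ ≤ dist x x' →
          (({π : Set (EuclideanSpace ℝ (Fin (d + 1))) | π ∈ P ∧ x ∈ π ∧ x' ∈ π}).ncard : ℝ) ≤ K * t ^ (-(d:ℝ))) →
      ∀ (Q Q' : Set (EuclideanSpace ℝ (Fin (d + 1)))), MeasurableSet Q → MeasurableSet Q' →
        (∀ x ∈ Q, ∀ x' ∈ Q', t * δ⁻¹ ≤ dist x x') →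
      ∀ (P' : Finset (Set (EuclideanSpace ℝ (Fin (d + 1))))), P' ⊆ P →
        t ^ (2 * d + 2 : ℝ) * (P.card : ℝ) ≤ (P'.card : ℝ) →
        (∀ π ∈ P', ENNReal.ofReal (t * ν) ≤ volume (W ∩ Q ∩ π) ∧
          ENNReal.ofReal (t * ν) ≤ volume (W ∩ Q' ∩ π)) →
      ν ≤ C * t ^ (-c) * (volume W).toReal * ((P.card : ℝ)) ^ (-(1:ℝ)/2) := by
  classical
  refine ⟨Real.sqrt K, (3 * d + 4) / 2, Real.sqrt_pos.mpr hK, by positivity, ?_⟩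
  intro t δ ν ht hδ hν W hWm hWfin P hPne hPm hsep Q Q' hQm hQ'm hQQ' P' hP'P hP'card hP'vol
  set A : Set (EuclideanSpace ℝ (Fin (d + 1))) := W ∩ Q with hAdef
  set B : Set (EuclideanSpace ℝ (Fin (d + 1))) := W ∩ Q' with hBdef
  have hAm : MeasurableSet A := hWm.inter hQm
  have hBm : MeasurableSet B := hWm.inter hQ'm
  have hπm : ∀ π ∈ P', MeasurableSet π := fun π hπ => hPm π (hP'P hπ)
  -- key : volume (A ∩ π) as an integral
  have key : ∀ (S : Set (EuclideanSpace ℝ (Fin (d + 1)))), ∀ π ∈ P', volume (S ∩ π) = ∫⁻ x in S, π.indicator (1 : EuclideanSpace ℝ (Fin (d + 1)) → ℝ≥0∞) x := by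
    intro S π hπ
    rw [lintegral_indicator_one (hπm π hπ), Measure.restrict_apply (hπm π hπ), Set.inter_comm]
  -- the double-counting sum
  set S : ℝ≥0∞ := ∑ π ∈ P', volume (A ∩ π) * volume (B ∩ π) with hSdef
  -- lower bound
  have hlow : (P'.card : ℝ≥0∞) * (ENNReal.ofReal (t * ν) * ENNReal.ofReal (t * ν)) ≤ S := by
    rw [← nsmul_eq_mul]
    refine Finset.card_nsmul_le_sum P' _ _ ?_
    intro π hπ
    exact mul_le_mul' (hP'vol π hπ).1 (hP'vol π hπ).2
  -- pointwise bound on the counting function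
  have hpt : ∀ x ∈ A, ∀ y ∈ B,
      (∑ π ∈ P', π.indicator (1 : EuclideanSpace ℝ (Fin (d + 1)) → ℝ≥0∞) x * π.indicator 1 y)
        ≤ ENNReal.ofReal (K * t ^ (-(d:ℝ))) := by
    intro x hx y hy
    have hdist : t * δ⁻¹ ≤ dist x y := hQQ' x hx.2 y hy.2
    have hcount := hsep x y hdist
    have hsum : (∑ π ∈ P', π.indicator (1 : EuclideanSpace ℝ (Fin (d + 1)) → ℝ≥0∞) x * π.indicator 1 y)
        = ((P'.filter (fun π => x ∈ π ∧ y ∈ π)).card : ℝ≥0∞) := by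
      rw [← Finset.sum_boole]
      refine Finset.sum_congr rfl ?_
      intro π _
      by_cases h1 : x ∈ π <;> by_cases h2 : y ∈ π <;>
        simp [Set.indicator, h1, h2]
    rw [hsum]
    have hfin : ({π : Set (EuclideanSpace ℝ (Fin (d + 1))) | π ∈ P ∧ x ∈ π ∧ y ∈ π}).Finite :=
      Set.Finite.subset P.finite_toSet (fun π hπ => hπ.1)
    have hcard : (P'.filter (fun π => x ∈ π ∧ y ∈ π)).card
        ≤ ({π : Set (EuclideanSpace ℝ (Fin (d + 1))) | π ∈ P ∧ x ∈ π ∧ y ∈ π}).ncard := by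
      rw [← Set.ncard_coe_finset]
      refine Set.ncard_le_ncard ?_ hfin
      intro π hπ
      simp only [Finset.coe_filter, Set.mem_setOf_eq] at hπ ⊢
      exact ⟨hP'P hπ.1, hπ.2⟩
    have hR : ((P'.filter (fun π => x ∈ π ∧ y ∈ π)).card : ℝ) ≤ K * t ^ (-(d:ℝ)) :=
      le_trans (by exact_mod_cast hcard) hcount
    rw [← ENNReal.ofReal_natCast]
    exact ENNReal.ofReal_le_ofReal hR
  -- upper bound via Tonelli-style rearrangement
  have hup : S ≤ ENNReal.ofReal (K * t ^ (-(d:ℝ))) * volume B * volume A := by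
    have step1 : S = ∫⁻ x in A, ∑ π ∈ P', π.indicator (1 : EuclideanSpace ℝ (Fin (d + 1)) → ℝ≥0∞) x
        * ∫⁻ y in B, π.indicator 1 y := by
      rw [hSdef]
      have e1 : ∀ π ∈ P', volume (A ∩ π) * volume (B ∩ π)
          = ∫⁻ x in A, π.indicator (1 : EuclideanSpace ℝ (Fin (d + 1)) → ℝ≥0∞) x
            * ∫⁻ y in B, π.indicator 1 y := by
        intro π hπ
        rw [key A π hπ, key B π hπ, ← lintegral_mul_const]
        exact (measurable_one.indicator (hπm π hπ))
      rw [Finset.sum_congr rfl e1]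
      exact (lintegral_finset_sum _ (fun π hπ =>
        ((measurable_one.indicator (hπm π hπ)).mul_const _))).symm
    have step2 : ∀ x, (∑ π ∈ P', π.indicator (1 : EuclideanSpace ℝ (Fin (d + 1)) → ℝ≥0∞) x
        * ∫⁻ y in B, π.indicator 1 y)
        = ∫⁻ y in B, ∑ π ∈ P', π.indicator (1 : EuclideanSpace ℝ (Fin (d + 1)) → ℝ≥0∞) x * π.indicator 1 y := by
      intro x
      have e2 : ∀ π ∈ P', π.indicator (1 : EuclideanSpace ℝ (Fin (d + 1)) → ℝ≥0∞) x
          * ∫⁻ y in B, π.indicator 1 y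
          = ∫⁻ y in B, π.indicator (1 : EuclideanSpace ℝ (Fin (d + 1)) → ℝ≥0∞) x
            * π.indicator 1 y := by
        intro π hπ
        rw [← lintegral_const_mul]
        exact (measurable_one.indicator (hπm π hπ))
      rw [Finset.sum_congr rfl e2]
      exact (lintegral_finset_sum _ (fun π hπ =>
        ((measurable_one.indicator (hπm π hπ)).const_mul _))).symm
    rw [step1]
    calc (∫⁻ x in A, ∑ π ∈ P', π.indicator (1 : EuclideanSpace ℝ (Fin (d + 1)) → ℝ≥0∞) x * ∫⁻ y in B, π.indicator 1 y)
        ≤ ∫⁻ _ in A, ENNReal.ofReal (K * t ^ (-(d:ℝ))) * volume B := by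
          refine setLIntegral_mono' hAm ?_
          intro x hx
          rw [step2 x]
          calc (∫⁻ y in B, ∑ π ∈ P', π.indicator (1 : EuclideanSpace ℝ (Fin (d + 1)) → ℝ≥0∞) x * π.indicator 1 y)
              ≤ ∫⁻ _ in B, ENNReal.ofReal (K * t ^ (-(d:ℝ))) :=
                setLIntegral_mono' hBm (fun y hy => hpt x hx y hy)
            _ = ENNReal.ofReal (K * t ^ (-(d:ℝ))) * volume B := by
                rw [setLIntegral_const]
      _ = ENNReal.ofReal (K * t ^ (-(d:ℝ))) * volume B * volume A := by
          rw [setLIntegral_const]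
  -- combine in ℝ≥0∞, enlarge A, B to W
  have hcomb : (P'.card : ℝ≥0∞) * (ENNReal.ofReal (t * ν) * ENNReal.ofReal (t * ν))
      ≤ ENNReal.ofReal (K * t ^ (-(d:ℝ))) * volume W * volume W := by
    refine le_trans (le_trans hlow hup) ?_
    gcongr
    · exact Set.inter_subset_left
    · exact Set.inter_subset_left
  -- pass to real numbers
  set w : ℝ := (volume W).toReal with hwdef
  have hw0 : 0 ≤ w := ENNReal.toReal_nonneg
  have htν : 0 ≤ t * ν := mul_nonneg ht.le hν
  have hKt : 0 ≤ K * t ^ (-(d:ℝ)) := mul_nonneg hK.le (Real.rpow_pos_of_pos ht _).le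
  have hRHSfin : ENNReal.ofReal (K * t ^ (-(d:ℝ))) * volume W * volume W ≠ ⊤ :=
    ENNReal.mul_ne_top (ENNReal.mul_ne_top ENNReal.ofReal_ne_top hWfin) hWfin
  have hreal : (P'.card : ℝ) * ((t * ν) * (t * ν)) ≤ K * t ^ (-(d:ℝ)) * w * w := by
    have := ENNReal.toReal_mono hRHSfin hcomb
    rwa [ENNReal.toReal_mul, ENNReal.toReal_mul, ENNReal.toReal_mul, ENNReal.toReal_mul,
      ENNReal.toReal_natCast, ENNReal.toReal_ofReal htν, ENNReal.toReal_ofReal hKt,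
      ← hwdef] at this
  -- purely real arithmetic from here
  have hp : (0:ℝ) < P.card := by exact_mod_cast hPne.card_pos
  set p : ℝ := (P.card : ℝ) with hpdef
  have ha : (0:ℝ) < t ^ (2 * (d:ℝ) + 2) := Real.rpow_pos_of_pos ht _
  have hH : t ^ (2 * (d:ℝ) + 2) * p * ((t * ν) * (t * ν)) ≤ K * t ^ (-(d:ℝ)) * w * w := by
    refine le_trans ?_ hreal
    exact mul_le_mul_of_nonneg_right hP'card (mul_nonneg htν htν)
  -- identity: t^(-(3d+4)) * t^(2d+2) * t^2 = t^(-d)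
  have hid : t ^ (-(3 * (d:ℝ) + 4)) * t ^ (2 * (d:ℝ) + 2) * t ^ (2:ℝ) = t ^ (-(d:ℝ)) := by
    rw [← Real.rpow_add ht, ← Real.rpow_add ht]
    ring_nf
  have ht2 : t ^ (2:ℝ) = t * t := by
    rw [show (2:ℝ) = ((2:ℕ):ℝ) by norm_num, Real.rpow_natCast]; ring
  -- squared target
  have hsq : ν ^ 2 ≤ (Real.sqrt K * t ^ (-((3 * (d:ℝ) + 4) / 2)) * w * p ^ (-(1:ℝ)/2)) ^ 2 := by
    have hexp1 : (t ^ (-((3 * (d:ℝ) + 4) / 2))) ^ 2 = t ^ (-(3 * (d:ℝ) + 4)) := by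
      rw [← Real.rpow_natCast (t ^ (-((3 * (d:ℝ) + 4) / 2))) 2, ← Real.rpow_mul ht.le]
      norm_num
    have hexp2 : (p ^ (-(1:ℝ)/2)) ^ 2 = p⁻¹ := by
      rw [← Real.rpow_natCast (p ^ (-(1:ℝ)/2)) 2, ← Real.rpow_mul hp.le]
      norm_num
      exact Real.rpow_neg_one p
    have hRHS : (Real.sqrt K * t ^ (-((3 * (d:ℝ) + 4) / 2)) * w * p ^ (-(1:ℝ)/2)) ^ 2
        = K * t ^ (-(3 * (d:ℝ) + 4)) * w ^ 2 * p⁻¹ := by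
      rw [mul_pow, mul_pow, mul_pow, Real.sq_sqrt hK.le, hexp1, hexp2]
    rw [hRHS]
    have hprod : (0:ℝ) < t ^ (2 * (d:ℝ) + 2) * (t * t) * p := by positivity
    refine le_of_mul_le_mul_right ?_ hprod
    calc ν ^ 2 * (t ^ (2 * (d:ℝ) + 2) * (t * t) * p)
        = t ^ (2 * (d:ℝ) + 2) * p * ((t * ν) * (t * ν)) := by ring
      _ ≤ K * t ^ (-(d:ℝ)) * w * w := hH
      _ = K * (t ^ (-(3 * (d:ℝ) + 4)) * t ^ (2 * (d:ℝ) + 2) * t ^ (2:ℝ)) * w * w := by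
          rw [hid]
      _ = K * t ^ (-(3 * (d:ℝ) + 4)) * w ^ 2 * p⁻¹ * (t ^ (2 * (d:ℝ) + 2) * (t * t) * p) := by
          rw [ht2]; field_simp
  have hRHS0 : 0 ≤ Real.sqrt K * t ^ (-((3 * (d:ℝ) + 4) / 2)) * w * p ^ (-(1:ℝ)/2) := by
    positivity
  have := Real.sqrt_le_sqrt hsq
  rwa [Real.sqrt_sq hν, Real.sqrt_sq hRHS0] at this
end
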